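/- Assume τ ≥ 0. Then for every Λ ∈ S_{n,δ}, θ_0(Λ) ∈ Θ(Λ). -/

import Mathlib

/-! For `Υ(Λ) = (μ;ν)` with `n + n'` even, `θ₀(Λ)` has `Υ = (ν ∪ {τ}; μ)` (symmetrically
`(ν; μ ∪ {τ})` when `n + n'` is odd). Adding one part to a partition raises each part of its
transpose by at most one, which gives the `⪯`-conditions, and the rank of `θ₀(Λ)` is
`2(|μ| + |ν| + τ) + d'(d'+1)/2 = n'`. That `τ` is an integer, so that this count is exact,
comes from `d(d+1)/2 + d'(d'+1)/2 ≡ n + n' (mod 2)`. -/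

namespace PanUnitary

/-- `part μ i` : the `i`-th largest element (0-indexed) of the multiset `μ`, `0` beyond.
Viewing a multiset of naturals as a partition (identified up to trailing zeros),
this is the `(i+1)`-st part. -/
def part (μ : Multiset ℕ) (i : ℕ) : ℕ := ((μ.sort (· ≤ ·)).reverse).getD i 0

/-- Remove the zero parts: the canonical (zero-free) representative of a partition. -/
def strip (μ : Multiset ℕ) : Multiset ℕ := μ.filter (fun x => 0 < x)

/-- `transpose μ j` is the `(j+1)`-st part of the transposed (conjugate) partition. -/
def transpose (μ : Multiset ℕ) (j : ℕ) : ℕ := (μ.filter (fun x => j < x)).card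

/-- `Preceq f g` : the partition whose parts are given by `f` is `⪯` the one given by `g`,
i.e. `g i - 1 ≤ f i ≤ g i` for all `i`. -/
def Preceq (f g : ℕ → ℕ) : Prop := ∀ i, g i ≤ f i + 1 ∧ f i ≤ g i

/-- An integer `δ` is admissible if it is even and nonnegative, or odd and negative. -/
def IsAdmissible (δ : ℤ) : Prop := (Even δ ∧ 0 ≤ δ) ∨ (Odd δ ∧ δ < 0)

/-- `ε = 1` if `δ` is even, `ε = 0` if `δ` is odd. -/
def eps (δ : ℤ) : ℕ := if Even δ then 1 else 0

/-- `d (d + 1) / 2` where `d = |δ|`. -/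
def halfTri (δ : ℤ) : ℕ := δ.natAbs * (δ.natAbs + 1) / 2

/-- A symbol: a pair of rows of natural numbers (the strict-decrease condition is
part of the predicate `Symbol.IsUnitary`). -/
structure Symbol where
  A : List ℕ
  B : List ℕ

def Symbol.defect (Λ : Symbol) : ℤ := (Λ.A.length : ℤ) - (Λ.B.length : ℤ)

/-- The row `(a_1, …, a_m)` gives the partition with parts `(a_i - e)/2 - (m - i)`. -/
def upsRow (L : List ℕ) (e : ℕ) : Multiset ℕ :=
  ((L.mapIdx fun i a => (a - e) / 2 - (L.length - 1 - i) : List ℕ) : Multiset ℕ)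

/-- The bipartition `Υ(Λ)` (canonical zero-free representatives). -/
def Symbol.Upsilon (Λ : Symbol) : Multiset ℕ × Multiset ℕ :=
  (strip (upsRow Λ.A (eps Λ.defect)), strip (upsRow Λ.B (1 - eps Λ.defect)))

/-- `Λ` is a unitary-type symbol of (admissible) defect `δ`. -/
def Symbol.IsUnitary (Λ : Symbol) (δ : ℤ) : Prop :=
  Λ.A.Pairwise (· > ·) ∧ Λ.B.Pairwise (· > ·) ∧ Λ.defect = δ ∧
    (∀ a ∈ Λ.A, a % 2 = eps δ) ∧ (∀ b ∈ Λ.B, b % 2 = 1 - eps δ)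

/-- The rank `2(|μ| + |ν|) + d(d+1)/2` of a unitary-type symbol. -/
def Symbol.rank (Λ : Symbol) : ℕ :=
  2 * (Λ.Upsilon.1.sum + Λ.Upsilon.2.sum) + halfTri Λ.defect

/-- Equivalence of symbols: same defect and same `Υ`. -/
def Symbol.Equiv (Λ Λ' : Symbol) : Prop :=
  Λ.defect = Λ'.defect ∧ Λ.Upsilon = Λ'.Upsilon

/-- Membership in `S_{n,δ}`: a unitary-type symbol of admissible defect `δ` and rank `n`. -/
def InS (n : ℕ) (δ : ℤ) (Λ : Symbol) : Prop :=
  IsAdmissible δ ∧ Λ.IsUnitary δ ∧ Λ.rank = n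

/-- `Σ min(x,y)` over all unordered pairs of (positions of) entries of the list. -/
def pairMinSum : List ℕ → ℕ
  | [] => 0
  | x :: xs => (xs.map (fun y => min x y)).sum + pairMinSum xs

/-- All entries of a symbol (both rows). -/
def Symbol.entries (Λ : Symbol) : List ℕ := Λ.A ++ Λ.B

/-- `ord(Λ) = Σ min(x,y) − Σ_{i=1}^{⌊N/2⌋} (N − 2i)²`. -/
def Symbol.ord (Λ : Symbol) : ℤ :=
  (pairMinSum Λ.entries : ℤ) -
    ∑ i ∈ Finset.Icc 1 (Λ.entries.length / 2),
      ((Λ.entries.length : ℤ) - 2 * (i : ℤ)) ^ 2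

/-- The shift of a unitary-type symbol. -/
def Symbol.shift (Λ : Symbol) : Symbol :=
  ⟨Λ.A.map (fun a => a + 2) ++ [eps Λ.defect],
   Λ.B.map (fun b => b + 2) ++ [1 - eps Λ.defect]⟩

/-- The defect `δ'` for the second member of the dual pair. -/
def deltaPrime (n n' : ℕ) (δ : ℤ) : ℤ :=
  if Even (n + n') then (if δ = 0 then 0 else -δ + 1) else -δ - 1

/-- `τ = ((n' − d'(d'+1)/2) − (n − d(d+1)/2)) / 2`. -/
def tau (n n' : ℕ) (δ : ℤ) : ℚ :=
  (((n' : ℚ) - (halfTri (deltaPrime n n' δ) : ℚ)) - ((n : ℚ) - (halfTri δ : ℚ))) / 2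

/-- `τ` as a natural number (equal to `τ` whenever `τ` is a nonnegative integer). -/
def tauNat (n n' : ℕ) (δ : ℤ) : ℕ :=
  ((n' + halfTri δ) - (n + halfTri (deltaPrime n n' δ))) / 2

/-- The set of (canonical, zero-free) bipartitions `(μ;ν)` with
`2(|μ|+|ν|) + d(d+1)/2 = n`; equivalently `|μ|+|ν| = (n − d(d+1)/2)/2`. -/
def BipSet (n : ℕ) (δ : ℤ) : Set (Multiset ℕ × Multiset ℕ) :=
  {p | (∀ x ∈ p.1, 0 < x) ∧ (∀ x ∈ p.2, 0 < x) ∧ 2 * (p.1.sum + p.2.sum) + halfTri δ = n}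

/-- The `⪯`-conditions (on transposes) defining the relation `Θ`, at the level of
bipartitions `p = Υ(Λ)`, `q = Υ(Λ')`. -/
def PrecCond (n n' : ℕ) (p q : Multiset ℕ × Multiset ℕ) : Prop :=
  if Even (n + n') then
    Preceq (transpose p.2) (transpose q.1) ∧ Preceq (transpose q.2) (transpose p.1)
  else
    Preceq (transpose p.1) (transpose q.2) ∧ Preceq (transpose q.1) (transpose p.2)

/-- `Θ` at the level of bipartitions (classes of symbols). -/
def ThetaB (n n' : ℕ) (δ : ℤ) (p q : Multiset ℕ × Multiset ℕ) : Prop :=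
  q ∈ BipSet n' (deltaPrime n n' δ) ∧ PrecCond n n' p q

/-- `Λ' ∈ Θ(Λ)` for symbols, where `Λ ∈ S_{n,δ}`. -/
def InTheta (n n' : ℕ) (δ : ℤ) (Λ Λ' : Symbol) : Prop :=
  InS n' (deltaPrime n n' δ) Λ' ∧ PrecCond n n' Λ.Upsilon Λ'.Upsilon

/-- `Λ' ∈ Θ(Λ)_k`. -/
def InThetaK (n n' : ℕ) (δ : ℤ) (k : ℕ) (Λ Λ' : Symbol) : Prop :=
  InTheta n n' δ Λ Λ' ∧
    (if Even (n + n') then (Λ'.Upsilon.2.sum : ℤ) = (Λ.Upsilon.1.sum : ℤ) - (k : ℤ)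
     else (Λ'.Upsilon.1.sum : ℤ) = (Λ.Upsilon.2.sum : ℤ) - (k : ℤ))

/-- Remove (one copy of) the largest part. -/
def mtail (μ : Multiset ℕ) : Multiset ℕ := μ.erase (part μ 0)

/-- `θ_k` at the level of bipartitions:
even case: `(μ;ν) ↦ (sort(ν, τ+k); sort(μ_2, …, μ_{m_1}, μ_1 − k))`;
odd case: `(μ;ν) ↦ (sort(ν_2, …, ν_{m_2}, ν_1 − k); sort(μ, τ+k))`. -/
def thetaBip (n n' : ℕ) (δ : ℤ) (k : ℕ) (p : Multiset ℕ × Multiset ℕ) :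
    Multiset ℕ × Multiset ℕ :=
  if Even (n + n') then
    (strip ((tauNat n n' δ + k) ::ₘ p.2), strip ((part p.1 0 - k) ::ₘ mtail p.1))
  else
    (strip ((part p.2 0 - k) ::ₘ mtail p.2), strip ((tauNat n n' δ + k) ::ₘ p.1))

/-- The unitary-type symbol of defect `δ` with `Υ = p`, whose first row has `m1`
entries and second row `m2` entries (valid whenever `m1, m2` are large enough). -/
def symbolOfBip (δ : ℤ) (p : Multiset ℕ × Multiset ℕ) (m1 m2 : ℕ) : Symbol :=
  ⟨List.ofFn (fun i : Fin m1 => 2 * (part p.1 (i : ℕ) + (m1 - 1 - (i : ℕ))) + eps δ),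
   List.ofFn (fun j : Fin m2 => 2 * (part p.2 (j : ℕ) + (m2 - 1 - (j : ℕ))) + (1 - eps δ))⟩

/-- A canonical representative symbol of defect `δ` with `Υ = p`. -/
def canonicalSymbol (δ : ℤ) (p : Multiset ℕ × Multiset ℕ) : Symbol :=
  symbolOfBip δ p (max p.1.card ((p.2.card : ℤ) + δ).toNat)
    (((max p.1.card ((p.2.card : ℤ) + δ).toNat : ℤ) - δ).toNat)

/-- A symbol representing the class `θ_k(Λ)`. -/
def thetaSymbol (n n' : ℕ) (δ : ℤ) (k : ℕ) (Λ : Symbol) : Symbol :=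
  canonicalSymbol (deltaPrime n n' δ) (thetaBip n n' δ k Λ.Upsilon)

/-- `K(Λ)`: `μ_1` in the even case, `ν_1` in the odd case. -/
def bigK (n n' : ℕ) (Λ : Symbol) : ℕ :=
  if Even (n + n') then part Λ.Upsilon.1 0 else part Λ.Upsilon.2 0

/-- `ord` at the level of bipartitions (well defined on classes). -/
def ordB (δ : ℤ) (p : Multiset ℕ × Multiset ℕ) : ℤ := (canonicalSymbol δ p).ord

/-- Strict lexicographic order on partitions. -/
def PartLexLt (μ ν : Multiset ℕ) : Prop :=
  ∃ i, (∀ j < i, part μ j = part ν j) ∧ part μ i < part ν i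

/-- The total order on `S_{n,δ}` (and on `S_{n',δ'}`), at the level of bipartitions;
it depends only on the parity of `n + n'`. -/
def BLt (n n' : ℕ) (p q : Multiset ℕ × Multiset ℕ) : Prop :=
  if Even (n + n') then
    p.1.sum < q.1.sum ∨ (p.1.sum = q.1.sum ∧ PartLexLt p.1 q.1) ∨
      (p.1 = q.1 ∧ PartLexLt p.2 q.2)
  else
    p.2.sum < q.2.sum ∨ (p.2.sum = q.2.sum ∧ PartLexLt p.2 q.2) ∨
      (p.2 = q.2 ∧ PartLexLt p.1 q.1)

/-- `q ∈ Θ♭(p)` relative to a given partial function `bar` (playing the role of `θ̄`). -/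
def InFlat (n n' : ℕ) (δ : ℤ)
    (bar : Multiset ℕ × Multiset ℕ → Option (Multiset ℕ × Multiset ℕ))
    (p q : Multiset ℕ × Multiset ℕ) : Prop :=
  ThetaB n n' δ p q ∧ ∀ r ∈ BipSet n δ, BLt n n' r p → bar r ≠ some q

/-- `bar` is the partial function `θ̄` defined by recursion along the total order:
on each `p ∈ S_{n,δ}`, if `Θ♭(p) ≠ ∅` then `bar p` is defined and is the smallest
element (w.r.t. the total order) of maximal `ord` in `Θ♭(p)`. -/
def IsThetaBar (n n' : ℕ) (δ : ℤ)
    (bar : Multiset ℕ × Multiset ℕ → Option (Multiset ℕ × Multiset ℕ)) : Prop :=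
  (∀ p, p ∉ BipSet n δ → bar p = none) ∧
  ∀ p ∈ BipSet n δ,
    ((∃ q, InFlat n n' δ bar p q) → ∃ q, bar p = some q) ∧
    ∀ q, bar p = some q →
      InFlat n n' δ bar p q ∧
      (∀ r, InFlat n n' δ bar p r →
        ordB (deltaPrime n n' δ) r ≤ ordB (deltaPrime n n' δ) q) ∧
      (∀ r, InFlat n n' δ bar p r →
        ordB (deltaPrime n n' δ) r = ordB (deltaPrime n n' δ) q → r ≠ q → BLt n n' q r)


lemma part_antitone (μ : Multiset ℕ) : Antitone (part μ) := by
  intro i j hij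
  unfold part
  set L := (μ.sort (· ≤ ·)).reverse with hL
  by_cases hj : j < L.length
  · have hi : i < L.length := lt_of_le_of_lt hij hj
    rw [List.getD_eq_getElem _ _ hj, List.getD_eq_getElem _ _ hi]
    rcases eq_or_lt_of_le hij with rfl | hlt
    · exact le_rfl
    · have hs : L.Pairwise (· ≥ ·) := by
        rw [hL, List.pairwise_reverse]
        exact Multiset.pairwise_sort μ (· ≤ ·)
      exact List.pairwise_iff_getElem.mp hs i j hi hj hlt
  · rw [List.getD_eq_default _ _ (not_lt.mp hj)]
    exact Nat.zero_le _

lemma part_zero_mem {μ : Multiset ℕ} (hμ : μ ≠ 0) : part μ 0 ∈ μ := by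
  have hlen : 0 < (μ.sort (· ≤ ·)).reverse.length := by
    simpa using Multiset.card_pos.mpr hμ
  rw [part, List.getD_eq_getElem _ _ hlen, ← Multiset.mem_sort (r := (· ≤ ·)), ← List.mem_reverse]
  exact List.getElem_mem _

lemma strip_eq_self {μ : Multiset ℕ} (h : ∀ x ∈ μ, 0 < x) : strip μ = μ :=
  Multiset.filter_eq_self.mpr h

lemma pos_of_mem_strip {μ : Multiset ℕ} {x : ℕ} (hx : x ∈ strip μ) : 0 < x :=
  (Multiset.mem_filter.mp hx).2

lemma sum_strip (μ : Multiset ℕ) : (strip μ).sum = μ.sum := by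
  conv_rhs => rw [← Multiset.filter_add_not (fun x => 0 < x) μ]
  rw [Multiset.sum_add, strip, Multiset.sum_eq_zero (s := Multiset.filter (fun x => ¬0 < x) μ),
    add_zero]
  intro x hx
  exact Nat.eq_zero_of_not_pos (Multiset.mem_filter.mp hx).2

lemma strip_add_replicate_zero (μ : Multiset ℕ) (k : ℕ) :
    strip (μ + Multiset.replicate k 0) = strip μ := by
  have hz : (Multiset.replicate k 0).filter (fun x => 0 < x) = 0 :=
    Multiset.filter_eq_nil.mpr fun a ha => by simp [Multiset.eq_of_mem_replicate ha]
  rw [strip, Multiset.filter_add, hz, add_zero, strip]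

lemma strip_cons_part_zero_mtail (μ : Multiset ℕ) :
    strip (part μ 0 ::ₘ mtail μ) = strip μ := by
  rcases eq_or_ne μ 0 with rfl | hμ
  · simp [strip, mtail, part]
  · rw [mtail, Multiset.cons_erase (part_zero_mem hμ)]

lemma transpose_strip (μ : Multiset ℕ) : transpose (strip μ) = transpose μ := by
  funext j
  unfold transpose strip
  rw [Multiset.filter_filter]
  congr 1
  exact Multiset.filter_congr fun x _ => and_iff_left_of_imp fun h => by omega

lemma preceq_refl (f : ℕ → ℕ) : Preceq f f := fun _ => ⟨Nat.le_succ _, le_rfl⟩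

lemma preceq_transpose_cons (a : ℕ) (μ : Multiset ℕ) :
    Preceq (transpose μ) (transpose (a ::ₘ μ)) := by
  intro j
  unfold transpose
  rw [Multiset.filter_cons]
  split <;> simp

lemma ofFn_getD_eq_append_replicate {α : Type*} {L : List α} {m : ℕ} (d : α)
    (h : L.length ≤ m) :
    List.ofFn (fun i : Fin m => L.getD i d) = L ++ List.replicate (m - L.length) d := by
  apply List.ext_getElem
  · simp only [List.length_ofFn, List.length_append, List.length_replicate]
    omega
  · intro i _ _
    rw [List.getElem_ofFn]
    by_cases hil : i < L.length
    · rw [List.getElem_append_left hil, List.getD_eq_getElem _ _ hil]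
    · rw [List.getD_eq_default _ _ (not_lt.mp hil),
        List.getElem_append_right (not_lt.mp hil), List.getElem_replicate]

lemma coe_ofFn_part (μ : Multiset ℕ) {m : ℕ} (h : μ.card ≤ m) :
    ((List.ofFn fun i : Fin m => part μ i) : Multiset ℕ)
      = μ + Multiset.replicate (m - μ.card) 0 := by
  have hlen : (μ.sort (· ≤ ·)).reverse.length = μ.card := by simp
  simp only [part]
  rw [ofFn_getD_eq_append_replicate 0 (hlen ▸ h), hlen, ← Multiset.coe_add,
    Multiset.coe_replicate, Multiset.coe_reverse, Multiset.sort_eq]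

lemma pairwise_gt_ofFn_row {g : ℕ → ℕ} (hg : Antitone g) (m e : ℕ) :
    (List.ofFn fun i : Fin m => 2 * (g i + (m - 1 - (i : ℕ))) + e).Pairwise (· > ·) := by
  rw [List.pairwise_ofFn]
  intro i j hij
  have := hg (le_of_lt hij)
  have := j.isLt
  simp only [gt_iff_lt]
  omega

lemma upsRow_ofFn (g : ℕ → ℕ) (m e : ℕ) :
    upsRow (List.ofFn fun i : Fin m => 2 * (g i + (m - 1 - (i : ℕ))) + e) e
      = ((List.ofFn fun i : Fin m => g i) : Multiset ℕ) := by
  unfold upsRow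
  congr 1
  apply List.ext_getElem
  · simp
  · intro i _ hi
    have him : i < m := by simpa using hi
    simp only [List.getElem_mapIdx, List.getElem_ofFn, List.length_ofFn]
    rw [Nat.add_sub_cancel, Nat.mul_div_cancel_left _ two_pos]
    omega

section SymbolOfBip

variable {δ : ℤ} {p : Multiset ℕ × Multiset ℕ} {m1 m2 : ℕ}

lemma symbolOfBip_defect (hd : (m1 : ℤ) - m2 = δ) : (symbolOfBip δ p m1 m2).defect = δ := by
  simpa [symbolOfBip, Symbol.defect] using hd

lemma symbolOfBip_isUnitary (hd : (m1 : ℤ) - m2 = δ) : (symbolOfBip δ p m1 m2).IsUnitary δ := by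
  have heps : eps δ ≤ 1 := by unfold eps; split <;> simp
  refine ⟨pairwise_gt_ofFn_row (part_antitone p.1) m1 (eps δ),
    pairwise_gt_ofFn_row (part_antitone p.2) m2 (1 - eps δ), symbolOfBip_defect hd, ?_, ?_⟩
  · simp only [symbolOfBip, List.mem_ofFn]
    rintro _ ⟨i, rfl⟩
    omega
  · simp only [symbolOfBip, List.mem_ofFn]
    rintro _ ⟨j, rfl⟩
    omega

lemma symbolOfBip_upsilon (h1 : ∀ x ∈ p.1, 0 < x) (h2 : ∀ x ∈ p.2, 0 < x)
    (hm1 : p.1.card ≤ m1) (hm2 : p.2.card ≤ m2) (hd : (m1 : ℤ) - m2 = δ) :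
    (symbolOfBip δ p m1 m2).Upsilon = p := by
  rw [Symbol.Upsilon, symbolOfBip_defect hd]
  simp only [symbolOfBip]
  rw [upsRow_ofFn, upsRow_ofFn, coe_ofFn_part p.1 hm1, coe_ofFn_part p.2 hm2,
    strip_add_replicate_zero, strip_add_replicate_zero, strip_eq_self h1, strip_eq_self h2]

end SymbolOfBip

lemma exists_canonicalSymbol_eq_symbolOfBip (δ : ℤ) (p : Multiset ℕ × Multiset ℕ) :
    ∃ m1 m2 : ℕ, p.1.card ≤ m1 ∧ p.2.card ≤ m2 ∧ (m1 : ℤ) - m2 = δ ∧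
      canonicalSymbol δ p = symbolOfBip δ p m1 m2 := by
  set m1 := max p.1.card ((p.2.card : ℤ) + δ).toNat
  have hm1 : ((p.2.card : ℤ) + δ).toNat ≤ m1 := le_max_right _ _
  have hm2 : (((m1 : ℤ) - δ).toNat : ℤ) = m1 - δ := Int.toNat_of_nonneg (by omega)
  exact ⟨m1, ((m1 : ℤ) - δ).toNat, le_max_left _ _, by omega, by omega,
    by rw [canonicalSymbol, Nat.cast_max]⟩

lemma upsilon_canonicalSymbol {δ : ℤ} {p : Multiset ℕ × Multiset ℕ}
    (h1 : ∀ x ∈ p.1, 0 < x) (h2 : ∀ x ∈ p.2, 0 < x) : (canonicalSymbol δ p).Upsilon = p := by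
  obtain ⟨m1, m2, hm1, hm2, hd, hcan⟩ := exists_canonicalSymbol_eq_symbolOfBip δ p
  rw [hcan, symbolOfBip_upsilon h1 h2 hm1 hm2 hd]

lemma inS_canonicalSymbol {n : ℕ} {δ : ℤ} {p : Multiset ℕ × Multiset ℕ} (hδ : IsAdmissible δ)
    (hp : p ∈ BipSet n δ) : InS n δ (canonicalSymbol δ p) := by
  obtain ⟨h1, h2, hrank⟩ := hp
  obtain ⟨m1, m2, -, -, hd, hcan⟩ := exists_canonicalSymbol_eq_symbolOfBip δ p
  have hu : (canonicalSymbol δ p).IsUnitary δ := hcan ▸ symbolOfBip_isUnitary hd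
  refine ⟨hδ, hu, ?_⟩
  rw [Symbol.rank, upsilon_canonicalSymbol h1 h2, hu.2.2.1, hrank]

lemma InS.upsilon_mem_bipSet {n : ℕ} {δ : ℤ} {Λ : Symbol} (h : InS n δ Λ) :
    Λ.Upsilon ∈ BipSet n δ := by
  obtain ⟨-, hu, hrank⟩ := h
  refine ⟨fun _ => pos_of_mem_strip (μ := upsRow Λ.A (eps Λ.defect)),
    fun _ => pos_of_mem_strip (μ := upsRow Λ.B (1 - eps Λ.defect)), ?_⟩
  rwa [Symbol.rank, hu.2.2.1] at hrank

lemma two_mul_halfTri (δ : ℤ) : 2 * halfTri δ = δ.natAbs * (δ.natAbs + 1) :=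
  Nat.mul_div_cancel' (even_iff_two_dvd.mp (Nat.even_mul_succ_self _))

lemma halfTri_add_halfTri_of_natAbs_eq_succ {a b : ℤ} (h : b.natAbs = a.natAbs + 1) :
    halfTri a + halfTri b = b.natAbs ^ 2 := by
  have : 2 * (halfTri a + halfTri b) = 2 * b.natAbs ^ 2 := by
    rw [mul_add, two_mul_halfTri, two_mul_halfTri, h]
    ring
  omega

lemma IsAdmissible.deltaPrime {δ : ℤ} (n n' : ℕ) (h : IsAdmissible δ) :
    IsAdmissible (deltaPrime n n' δ) := by
  unfold PanUnitary.deltaPrime IsAdmissible at *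
  rw [Int.even_iff, Int.odd_iff] at *
  split_ifs <;> omega

/-- Whenever `δ ≠ 0` or `n + n'` is odd, `|δ|` and `|δ'|` are consecutive, so
`d(d+1)/2 + d'(d'+1)/2 = max(d, d')²`, and `max(d, d')` has the parity of `n + n'`. -/
lemma IsAdmissible.halfTri_add_halfTri_deltaPrime_mod_two {δ : ℤ} (n n' : ℕ)
    (h : IsAdmissible δ) :
    (halfTri δ + halfTri (PanUnitary.deltaPrime n n' δ)) % 2 = (n + n') % 2 := by
  have sq_mod {a b : ℤ} (hab : b.natAbs = a.natAbs + 1) :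
      (halfTri a + halfTri b) % 2 = b.natAbs % 2 := by
    rw [halfTri_add_halfTri_of_natAbs_eq_succ hab, Nat.pow_mod]
    rcases Nat.mod_two_eq_zero_or_one b.natAbs with h | h <;> simp [h]
  unfold IsAdmissible at h
  rw [Int.even_iff, Int.odd_iff] at h
  unfold PanUnitary.deltaPrime
  split_ifs with hpar h0
  · subst h0
    rw [Nat.even_iff] at hpar
    simp only [halfTri, Int.natAbs_zero]
    omega
  · rw [Nat.even_iff] at hpar
    rcases h with ⟨_, _⟩ | ⟨_, _⟩
    · have := sq_mod (a := -δ + 1) (b := δ) (by omega); omega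
    · have := sq_mod (a := δ) (b := -δ + 1) (by omega); omega
  · rw [Nat.even_iff] at hpar
    rcases h with ⟨_, _⟩ | ⟨_, _⟩
    · have := sq_mod (a := δ) (b := -δ - 1) (by omega); omega
    · have := sq_mod (a := -δ - 1) (b := δ) (by omega); omega

lemma two_mul_tauNat_add {n n' : ℕ} {δ : ℤ} (hδ : IsAdmissible δ)
    (hn : (n + halfTri δ) % 2 = 0) (hτ : 0 ≤ tau n n' δ) :
    2 * tauNat n n' δ + n + halfTri (deltaPrime n n' δ) = n' + halfTri δ := by
  have hle : n + halfTri (deltaPrime n n' δ) ≤ n' + halfTri δ := by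
    have : (n : ℚ) + halfTri (deltaPrime n n' δ) ≤ n' + halfTri δ := by
      rw [tau] at hτ
      linarith
    exact_mod_cast this
  have := hδ.halfTri_add_halfTri_deltaPrime_mod_two n n'
  unfold tauNat
  omega

lemma thetaBip_zero {n n' : ℕ} {δ : ℤ} {p : Multiset ℕ × Multiset ℕ}
    (h1 : ∀ x ∈ p.1, 0 < x) (h2 : ∀ x ∈ p.2, 0 < x) :
    thetaBip n n' δ 0 p = if Even (n + n') then (strip (tauNat n n' δ ::ₘ p.2), p.1)
      else (p.2, strip (tauNat n n' δ ::ₘ p.1)) := by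
  simp only [thetaBip, add_zero, Nat.sub_zero, strip_cons_part_zero_mtail, strip_eq_self h1,
    strip_eq_self h2]

lemma thetaB_thetaBip_zero {n n' : ℕ} {δ : ℤ} {p : Multiset ℕ × Multiset ℕ}
    (hδ : IsAdmissible δ) (hτ : 0 ≤ tau n n' δ) (hp : p ∈ BipSet n δ) :
    ThetaB n n' δ p (thetaBip n n' δ 0 p) := by
  obtain ⟨h1, h2, hrank⟩ := hp
  have htau := two_mul_tauNat_add hδ (by omega) hτ
  rw [thetaBip_zero h1 h2, ThetaB, PrecCond]
  split_ifs with hpar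
  · refine ⟨⟨fun _ => pos_of_mem_strip, h1, ?_⟩, ?_, preceq_refl _⟩
    · dsimp only
      rw [sum_strip, Multiset.sum_cons]
      omega
    · dsimp only
      rw [transpose_strip]
      exact preceq_transpose_cons _ _
  · refine ⟨⟨h2, fun _ => pos_of_mem_strip, ?_⟩, ?_, preceq_refl _⟩
    · dsimp only
      rw [sum_strip, Multiset.sum_cons]
      omega
    · dsimp only
      rw [transpose_strip]
      exact preceq_transpose_cons _ _

/-- If `τ ≥ 0` then `θ_0(Λ) ∈ Θ(Λ)` for every `Λ ∈ S_{n,δ}`. -/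
theorem statement4 (n n' : ℕ) (δ : ℤ) (hτ : 0 ≤ tau n n' δ)
    (Λ : Symbol) (hΛ : InS n δ Λ) :
    InTheta n n' δ Λ (thetaSymbol n n' δ 0 Λ) := by
  obtain ⟨hq, hprec⟩ := thetaB_thetaBip_zero hΛ.1 hτ hΛ.upsilon_mem_bipSet
  refine ⟨inS_canonicalSymbol (hΛ.1.deltaPrime n n') hq, ?_⟩
  rwa [thetaSymbol, upsilon_canonicalSymbol hq.1 hq.2.1]

end PanUnitary
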